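/- Let B ∈ ℝ^{M×N}. For every x ∈ ℝ^N satisfying ‖BᵀB x‖_∞ ≤ 1 (i.e., |[BᵀB x]_n| ≤ 1 for all n), the generalized Huber function satisfies S_B(x) = (1/2)‖B x‖₂². -/
import Mathlib


open Matrix

/-- The ℓ₁ norm on `ℝ^N`. -/
noncomputable def norm1 {N : ℕ} (v : Fin N → ℝ) : ℝ := ∑ n, |v n|

/-- The squared Euclidean (ℓ₂) norm on `ℝ^M`. -/
def norm2sq {M : ℕ} (u : Fin M → ℝ) : ℝ := ∑ m, (u m) ^ 2

/-- The generalized Huber function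
`S_B(x) = inf_v ( ‖v‖₁ + (1/2) ‖B(x - v)‖₂² )`. -/
noncomputable def genHuber {M N : ℕ} (B : Matrix (Fin M) (Fin N) ℝ) (x : Fin N → ℝ) : ℝ :=
  ⨅ v : Fin N → ℝ, (norm1 v + (1 / 2) * norm2sq (B.mulVec (x - v)))

/-- The generalized MC (GMC) penalty `ψ_B(x) = ‖x‖₁ - S_B(x)`. -/
noncomputable def gmcPenalty {M N : ℕ} (B : Matrix (Fin M) (Fin N) ℝ) (x : Fin N → ℝ) : ℝ :=
  norm1 x - genHuber B x

lemma norm2sq_nonneg {M : ℕ} (u : Fin M → ℝ) : 0 ≤ norm2sq u :=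
  Finset.sum_nonneg fun _ _ => sq_nonneg _

lemma key_lb {M N : ℕ} (B : Matrix (Fin M) (Fin N) ℝ) (x : Fin N → ℝ)
    (h : ∀ n, |(Bᵀ * B).mulVec x n| ≤ 1) (v : Fin N → ℝ) :
    (1 / 2) * norm2sq (B.mulVec x) ≤ norm1 v + (1 / 2) * norm2sq (B.mulVec (x - v)) := by
  set a := B.mulVec x
  set b := B.mulVec v
  have expand : norm2sq (B.mulVec (x - v)) =
      norm2sq a - 2 * (a ⬝ᵥ b) + norm2sq b := by
    have h1 : B.mulVec (x - v) = a - b := Matrix.mulVec_sub B x v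
    rw [h1]
    simp only [norm2sq, dotProduct, Pi.sub_apply]
    rw [Finset.mul_sum, ← Finset.sum_sub_distrib, ← Finset.sum_add_distrib]
    exact Finset.sum_congr rfl fun m _ => by ring
  have hdot : a ⬝ᵥ b = (Bᵀ * B).mulVec x ⬝ᵥ v := by
    rw [Matrix.dotProduct_mulVec, ← Matrix.mulVec_transpose, Matrix.mulVec_mulVec]
  have hbound : a ⬝ᵥ b ≤ norm1 v := by
    rw [hdot]
    calc (Bᵀ * B).mulVec x ⬝ᵥ v ≤ |(Bᵀ * B).mulVec x ⬝ᵥ v| := le_abs_self _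
      _ ≤ ∑ n, |(Bᵀ * B).mulVec x n * v n| := Finset.abs_sum_le_sum_abs _ _
      _ ≤ ∑ n, |v n| := by
          apply Finset.sum_le_sum
          intro n _
          rw [abs_mul]
          calc |(Bᵀ * B).mulVec x n| * |v n| ≤ 1 * |v n| :=
                mul_le_mul_of_nonneg_right (h n) (abs_nonneg _)
            _ = |v n| := one_mul _
  have hb := norm2sq_nonneg b
  rw [expand]
  nlinarith

/-- If `‖BᵀB x‖_∞ ≤ 1`, then `S_B(x) = (1/2)‖Bx‖₂²`. -/
theorem genHuber_eq_quadratic_near_zero {M N : ℕ} (B : Matrix (Fin M) (Fin N) ℝ)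
    (x : Fin N → ℝ) (h : ∀ n, |(Bᵀ * B).mulVec x n| ≤ 1) :
    genHuber B x = (1 / 2) * norm2sq (B.mulVec x) := by
  have hbdd : BddBelow (Set.range fun v : Fin N → ℝ =>
      norm1 v + (1 / 2) * norm2sq (B.mulVec (x - v))) := by
    refine ⟨(1 / 2) * norm2sq (B.mulVec x), ?_⟩
    rintro y ⟨v, rfl⟩
    exact key_lb B x h v
  apply le_antisymm
  · have := ciInf_le hbdd (0 : Fin N → ℝ)
    simpa [norm1, genHuber] using this
  · exact le_ciInf (key_lb B x h)
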